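/- Suppose θ₀' is an even function (as holds for the standard symmetric potential W(ρ) = ¼ρ²(1−ρ)² with θ₀(z) = ½(1 + tanh(z/(2√2)))). Then Ψ₀(z;−V) = Ψ₀(−z;V) for all z, V ∈ ℝ, so Φ_β is an even function: Φ_β(−V) = Φ_β(V) for all V. Consequently the equation 2c₀V = Φ_β(V) − Φ_β(−V) has V = 0 as its unique real solution. -/

import Mathlib

open Filter MeasureTheory Real

/-- The standard double-well potential `W(ρ) = ¼ ρ² (1-ρ)²`. -/
noncomputable def W (ρ : ℝ) : ℝ := (1 / 4) * ρ ^ 2 * (1 - ρ) ^ 2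

/-- The standing wave profile `θ₀(z) = ½ (1 + tanh (z / (2√2)))`. -/
noncomputable def θ₀ (z : ℝ) : ℝ := (1 / 2) * (1 + Real.tanh (z / (2 * Real.sqrt 2)))

/-- `c₀ = ∫_ℝ (θ₀'(z))² dz`. -/
noncomputable def c₀ : ℝ := ∫ z : ℝ, (deriv θ₀ z) ^ 2

/-- `Ψ` is a bounded `C²` solution of `-Ψ'' - VΨ' + Ψ + βθ₀' = 0` on `ℝ`
vanishing at `±∞`. -/
def IsBddSol (β V : ℝ) (Ψ : ℝ → ℝ) : Prop :=
  ContDiff ℝ 2 Ψ ∧ (∃ M : ℝ, ∀ z : ℝ, |Ψ z| ≤ M) ∧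
    (∀ z : ℝ, -(deriv (deriv Ψ) z) - V * deriv Ψ z + Ψ z + β * deriv θ₀ z = 0) ∧
    Tendsto Ψ atBot (nhds 0) ∧ Tendsto Ψ atTop (nhds 0)

/-- `Φ_β(V) = ∫_ℝ Ψ₀(z; V) (θ₀'(z))² dz`. -/
noncomputable def Phi (Ψ₀ : ℝ → ℝ → ℝ) (V : ℝ) : ℝ :=
  ∫ z : ℝ, Ψ₀ V z * (deriv θ₀ z) ^ 2

/-!
Reflecting `z ↦ -z` turns a solution of `-Ψ'' - VΨ' + Ψ + βθ₀' = 0` into one of the same equation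
with `-V`, because `θ₀' = 1 / (2κ cosh² (z/κ))` (with `κ = 2√2`) is even; uniqueness of the bounded
solution then gives `Ψ₀(z; -V) = Ψ₀(-z; V)`, and the change of variables `z ↦ -z` in `Φ_β` shows
that `Φ_β` is even. The root equation thus reads `2c₀V = 0`, and `c₀ > 0` since `θ₀' > 0` with
`(θ₀')² ≲ 1 / (1 + (z/κ)²)` integrable.
-/

noncomputable def κ : ℝ := 2 * √2

lemma κ_pos : 0 < κ := by
  unfold κ
  positivity

lemma hasDerivAt_tanh (x : ℝ) : HasDerivAt tanh (1 / cosh x ^ 2) x := by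
  have h := (hasDerivAt_sinh x).div (hasDerivAt_cosh x) (cosh_pos x).ne'
  rw [← sq, ← sq, cosh_sq_sub_sinh_sq] at h
  rwa [show tanh = sinh / cosh from funext tanh_eq_sinh_div_cosh]

lemma hasDerivAt_θ₀ (z : ℝ) : HasDerivAt θ₀ (1 / (2 * κ * cosh (z / κ) ^ 2)) z := by
  have hinner : HasDerivAt (fun z : ℝ => z / κ) (1 / κ) z := by
    simpa using (hasDerivAt_id z).div_const κ
  refine (((hasDerivAt_tanh (z / κ)).comp z hinner).const_add 1 |>.const_mul (1 / 2)).congr_deriv ?_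
  have := κ_pos.ne'
  have := (cosh_pos (z / κ)).ne'
  field_simp

lemma deriv_θ₀ : deriv θ₀ = fun z => 1 / (2 * κ * cosh (z / κ) ^ 2) :=
  funext fun z => (hasDerivAt_θ₀ z).deriv

lemma deriv_θ₀_pos (z : ℝ) : 0 < deriv θ₀ z := by
  rw [deriv_θ₀]
  have := κ_pos
  have := cosh_pos (z / κ)
  positivity

lemma continuous_deriv_θ₀ : Continuous (deriv θ₀) := by
  rw [deriv_θ₀]
  refine continuous_const.div (by fun_prop) fun z => ?_
  have := κ_pos
  have := cosh_pos (z / κ)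
  positivity

lemma deriv_θ₀_neg (z : ℝ) : deriv θ₀ (-z) = deriv θ₀ z := by
  simp only [deriv_θ₀, neg_div, cosh_neg]

lemma one_add_sq_le_cosh_sq (x : ℝ) : 1 + x ^ 2 ≤ cosh x ^ 2 := by
  have hsinh : x ^ 2 ≤ sinh x ^ 2 := by
    rw [sq_le_sq, abs_sinh]
    exact self_le_sinh_iff.mpr (abs_nonneg x)
  rw [cosh_sq']
  linarith

lemma deriv_θ₀_sq_le (z : ℝ) :
    deriv θ₀ z ^ 2 ≤ 1 / (2 * κ) ^ 2 * (1 + (z / κ) ^ 2)⁻¹ := by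
  have hc : 1 ≤ cosh (z / κ) ^ 2 := one_le_pow₀ (one_le_cosh _)
  have hcosh4 : 1 + (z / κ) ^ 2 ≤ (cosh (z / κ) ^ 2) ^ 2 :=
    (one_add_sq_le_cosh_sq _).trans (le_self_pow₀ hc two_ne_zero)
  have := κ_pos
  calc deriv θ₀ z ^ 2 = 1 / (2 * κ) ^ 2 * ((cosh (z / κ) ^ 2) ^ 2)⁻¹ := by rw [deriv_θ₀]; ring
    _ ≤ 1 / (2 * κ) ^ 2 * (1 + (z / κ) ^ 2)⁻¹ := by gcongr

lemma integrable_deriv_θ₀_sq : Integrable fun z => deriv θ₀ z ^ 2 := by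
  refine ((integrable_inv_one_add_sq.comp_div κ_pos.ne').const_mul (1 / (2 * κ) ^ 2)).mono' ?_ ?_
  · exact (continuous_deriv_θ₀.pow 2).aestronglyMeasurable
  · exact Eventually.of_forall fun z => by
      rw [Real.norm_eq_abs, abs_of_nonneg (sq_nonneg _)]
      exact deriv_θ₀_sq_le z

lemma c₀_pos : 0 < c₀ := by
  rw [c₀, integral_pos_iff_support_of_nonneg (fun z => sq_nonneg _) integrable_deriv_θ₀_sq]
  have : (Function.support fun z => deriv θ₀ z ^ 2) = Set.univ :=
    Set.eq_univ_of_forall fun z => pow_ne_zero 2 (deriv_θ₀_pos z).ne'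
  simp [this]

lemma IsBddSol.comp_neg {β V : ℝ} {Ψ : ℝ → ℝ} (h : IsBddSol β V Ψ) :
    IsBddSol β (-V) fun z => Ψ (-z) := by
  obtain ⟨hC, ⟨M, hM⟩, hode, hbot, htop⟩ := h
  have hderiv : deriv (fun z => Ψ (-z)) = fun z => -deriv Ψ (-z) :=
    funext fun z => deriv_comp_neg Ψ z
  have hderiv2 (z : ℝ) : deriv (deriv fun z => Ψ (-z)) z = deriv (deriv Ψ) (-z) := by
    rw [hderiv, deriv.fun_neg, deriv_comp_neg, neg_neg]
  refine ⟨hC.comp contDiff_neg, ⟨M, fun z => hM (-z)⟩, fun z => ?_,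
    htop.comp tendsto_neg_atBot_atTop, hbot.comp tendsto_neg_atTop_atBot⟩
  rw [hderiv2, hderiv, ← deriv_θ₀_neg z]
  linarith [hode (-z)]

lemma Phi_neg {Ψ₀ : ℝ → ℝ → ℝ} (hrefl : ∀ z V, Ψ₀ (-V) z = Ψ₀ V (-z)) (V : ℝ) :
    Phi Ψ₀ (-V) = Phi Ψ₀ V := by
  calc Phi Ψ₀ (-V) = ∫ z, Ψ₀ V (-z) * deriv θ₀ (-z) ^ 2 := by
        simp only [Phi, hrefl, deriv_θ₀_neg]
    _ = Phi Ψ₀ V := integral_neg_eq_self (fun z => Ψ₀ V z * deriv θ₀ z ^ 2) volume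

theorem phi_even_and_zero_unique_root_general
    (β : ℝ) (Ψ₀ : ℝ → ℝ → ℝ)
    (hΨ : ∀ V : ℝ, IsBddSol β V (Ψ₀ V))
    (hΨuniq : ∀ V : ℝ, ∀ Ψ' : ℝ → ℝ, IsBddSol β V Ψ' → Ψ' = Ψ₀ V) :
    (∀ z V : ℝ, Ψ₀ (-V) z = Ψ₀ V (-z)) ∧
    (∀ V : ℝ, Phi Ψ₀ (-V) = Phi Ψ₀ V) ∧
    (∀ V : ℝ, 2 * c₀ * V = Phi Ψ₀ V - Phi Ψ₀ (-V) ↔ V = 0) := by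
  have hrefl : ∀ z V : ℝ, Ψ₀ (-V) z = Ψ₀ V (-z) := fun z V =>
    (congrFun (hΨuniq (-V) _ (hΨ V).comp_neg) z).symm
  refine ⟨hrefl, Phi_neg hrefl, fun V => ?_⟩
  rw [Phi_neg hrefl, sub_self]
  simp [c₀_pos.ne']

/-- if `θ₀'` is even (as holds for the symmetric potential above), then
`Ψ₀(z; -V) = Ψ₀(-z; V)`, so `Φ_β` is even, and consequently `V = 0` is the unique real
solution of `2c₀V = Φ_β(V) - Φ_β(-V)`. -/
theorem phi_even_and_zero_unique_root
    (hEven : ∀ z : ℝ, deriv θ₀ (-z) = deriv θ₀ z)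
    (β : ℝ) (hβ : 0 < β) (Ψ₀ : ℝ → ℝ → ℝ)
    (hΨ : ∀ V : ℝ, IsBddSol β V (Ψ₀ V))
    (hΨuniq : ∀ V : ℝ, ∀ Ψ' : ℝ → ℝ, IsBddSol β V Ψ' → Ψ' = Ψ₀ V) :
    (∀ z V : ℝ, Ψ₀ (-V) z = Ψ₀ V (-z)) ∧
    (∀ V : ℝ, Phi Ψ₀ (-V) = Phi Ψ₀ V) ∧
    (∀ V : ℝ, 2 * c₀ * V = Phi Ψ₀ V - Phi Ψ₀ (-V) ↔ V = 0) :=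
  phi_even_and_zero_unique_root_general β Ψ₀ hΨ hΨuniq
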